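/- In the OMD updates w_t = argmin_{w∈Ω}{⟨w, m_t⟩ + D_{ψ_t}(w, w'_t)} and w'_{t+1} = argmin_{w∈Ω}{⟨w, ℓ̂_t⟩ + D_{ψ_t}(w, w'_t)}, for all u ∈ Ω: ⟨w_t - u, ℓ̂_t⟩ ≤ D_{ψ_t}(u, w'_t) - D_{ψ_t}(u, w'_{t+1}) + ⟨w_t - w'_{t+1}, ℓ̂_t - m_t⟩ - D_{ψ_t}(w'_{t+1}, w_t) - D_{ψ_t}(w_t, w'_t). -/

import Mathlib

/-! Both OMD updates are Bregman proximal steps. For such a step `x` (linear term `c`, centre `v`),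
first-order optimality against `y ∈ Ω` together with the three-point identity of the Bregman
divergence gives `⟪x - y, c⟫ ≤ D(y, v) - D(y, x) - D(x, v)`. Applying this to the first step with
`y = w'_{t+1}` and to the second with `y = u`, and splitting
`⟪w_t - u, ℓ̂⟫ = ⟪w'_{t+1} - u, ℓ̂⟫ + ⟪w_t - w'_{t+1}, ℓ̂ - m⟫ + ⟪w_t - w'_{t+1}, m⟫`,
the two bounds add up to the claim. -/

open scoped RealInnerProductSpace

/-- Bregman divergence of `ψ` with gradient map `g`. -/
noncomputable def breg {K : ℕ} (ψ : EuclideanSpace ℝ (Fin K) → ℝ)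
    (g : EuclideanSpace ℝ (Fin K) → EuclideanSpace ℝ (Fin K))
    (u v : EuclideanSpace ℝ (Fin K)) : ℝ :=
  ψ u - ψ v - ⟪g v, u - v⟫

theorem IsMinOn.inner_gradient_sub_nonneg {E : Type*} [NormedAddCommGroup E]
    [InnerProductSpace ℝ E] [CompleteSpace E] {f : E → ℝ} {s : Set E} {x y G : E}
    (h : IsMinOn f s x) (hs : Convex ℝ s) (hx : x ∈ s) (hf : HasGradientAt f G x)
    (hy : y ∈ s) : 0 ≤ ⟪G, y - x⟫ :=
  h.localize.hasFDerivWithinAt_nonneg hf.hasFDerivAt.hasFDerivWithinAt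
    (sub_mem_posTangentConeAt_of_segment_subset (hs.segment_subset hx hy))

section Bregman

variable {K : ℕ} {ψ : EuclideanSpace ℝ (Fin K) → ℝ}
  {g : EuclideanSpace ℝ (Fin K) → EuclideanSpace ℝ (Fin K)}

theorem breg_three_point (a b c : EuclideanSpace ℝ (Fin K)) :
    breg ψ g c b - breg ψ g c a - breg ψ g a b = ⟪g a - g b, c - a⟫ := by
  simp only [breg, inner_sub_left, inner_sub_right]
  ring

theorem hasGradientAt_inner_add_breg {x : EuclideanSpace ℝ (Fin K)}
    (hψ : HasGradientAt ψ (g x) x) (c v : EuclideanSpace ℝ (Fin K)) :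
    HasGradientAt (fun w => ⟪w, c⟫ + breg ψ g w v) (c + g x - g v) x := by
  rw [hasGradientAt_iff_hasFDerivAt] at hψ ⊢
  have hlin (a : EuclideanSpace ℝ (Fin K)) :
      HasFDerivAt (fun w => ⟪a, w⟫) (InnerProductSpace.toDual ℝ _ a) x :=
    (InnerProductSpace.toDual ℝ _ a).hasFDerivAt
  have hsum := (((hlin c).add hψ).sub ((hlin (g v)).sub_const ⟪g v, v⟫)).sub_const (ψ v)
  have hfun : (fun w => ⟪w, c⟫ + breg ψ g w v)
      = fun w => ⟪c, w⟫ + ψ w - (⟪g v, w⟫ - ⟪g v, v⟫) - ψ v := by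
    funext w
    simp only [breg, inner_sub_right, real_inner_comm c]
    ring
  rw [hfun, map_sub, map_add]
  exact hsum

theorem inner_sub_le_breg_of_isMinOn {Ω : Set (EuclideanSpace ℝ (Fin K))} (hΩ : Convex ℝ Ω)
    {c v x y : EuclideanSpace ℝ (Fin K)} (hψ : HasGradientAt ψ (g x) x)
    (hmin : IsMinOn (fun w => ⟪w, c⟫ + breg ψ g w v) Ω x) (hx : x ∈ Ω) (hy : y ∈ Ω) :
    ⟪x - y, c⟫ ≤ breg ψ g y v - breg ψ g y x - breg ψ g x v := by
  have hfoc : 0 ≤ ⟪c, y - x⟫ + ⟪g x - g v, y - x⟫ := by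
    simpa only [add_sub_assoc, inner_add_left] using
      hmin.inner_gradient_sub_nonneg hΩ hx (hasGradientAt_inner_add_breg hψ c v) hy
  rw [breg_three_point, ← neg_sub y x, inner_neg_left, real_inner_comm]
  linarith

end Bregman

theorem stmt_7_general {K : ℕ} (Ω : Set (EuclideanSpace ℝ (Fin K))) (hΩ : Convex ℝ Ω)
    (ψ : EuclideanSpace ℝ (Fin K) → ℝ)
    (g : EuclideanSpace ℝ (Fin K) → EuclideanSpace ℝ (Fin K))
    (hg : ∀ v, HasGradientAt ψ (g v) v)
    (m ℓhat wt wt' wt1' : EuclideanSpace ℝ (Fin K))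
    (hwt : wt ∈ Ω) (hwt1' : wt1' ∈ Ω)
    (hmin1 : ∀ w ∈ Ω, ⟪wt, m⟫ + breg ψ g wt wt' ≤ ⟪w, m⟫ + breg ψ g w wt')
    (hmin2 : ∀ w ∈ Ω, ⟪wt1', ℓhat⟫ + breg ψ g wt1' wt' ≤ ⟪w, ℓhat⟫ + breg ψ g w wt')
    (u : EuclideanSpace ℝ (Fin K)) (hu : u ∈ Ω) :
    ⟪wt - u, ℓhat⟫ ≤
      breg ψ g u wt' - breg ψ g u wt1' + ⟪wt - wt1', ℓhat - m⟫
        - breg ψ g wt1' wt - breg ψ g wt wt' := by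
  have hstep1 := inner_sub_le_breg_of_isMinOn hΩ (hg wt) (isMinOn_iff.2 hmin1) hwt hwt1'
  have hstep2 := inner_sub_le_breg_of_isMinOn hΩ (hg wt1') (isMinOn_iff.2 hmin2) hwt1' hu
  have hsplit : ⟪wt - u, ℓhat⟫ = ⟪wt1' - u, ℓhat⟫ + ⟪wt - wt1', ℓhat - m⟫ + ⟪wt - wt1', m⟫ := by
    simp only [inner_sub_left, inner_sub_right]
    ring
  linarith

theorem stmt_7 {K : ℕ} (Ω : Set (EuclideanSpace ℝ (Fin K))) (hΩ : Convex ℝ Ω)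
    (ψ : EuclideanSpace ℝ (Fin K) → ℝ)
    (g : EuclideanSpace ℝ (Fin K) → EuclideanSpace ℝ (Fin K))
    (hg : ∀ v, HasGradientAt ψ (g v) v)
    (hψ : ConvexOn ℝ Ω ψ)
    (m ℓhat wt wt' wt1' : EuclideanSpace ℝ (Fin K))
    (hwt : wt ∈ Ω) (hwt' : wt' ∈ Ω) (hwt1' : wt1' ∈ Ω)
    (hmin1 : ∀ w ∈ Ω, ⟪wt, m⟫ + breg ψ g wt wt' ≤ ⟪w, m⟫ + breg ψ g w wt')
    (hmin2 : ∀ w ∈ Ω, ⟪wt1', ℓhat⟫ + breg ψ g wt1' wt' ≤ ⟪w, ℓhat⟫ + breg ψ g w wt')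
    (u : EuclideanSpace ℝ (Fin K)) (hu : u ∈ Ω) :
    ⟪wt - u, ℓhat⟫ ≤
      breg ψ g u wt' - breg ψ g u wt1' + ⟪wt - wt1', ℓhat - m⟫
        - breg ψ g wt1' wt - breg ψ g wt wt' :=
  stmt_7_general Ω hΩ ψ g hg m ℓhat wt wt' wt1' hwt hwt1' hmin1 hmin2 u hu
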